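/- The expected value of the Some-to-All estimator is a lower bound on the marginal log-likelihood: with Φ uniform over S-element subsets of Fin A and z_s ∼ q_{φ_s} for φ_s ∈ Φ, E[(1/S)∑_{s ∈ Φ} log(p(x,z_s)/((1/A)∑_{a=1}^A q_{φ_a}(z_s|x)))] ≤ log p(x). -/

import Mathlib

/-!
Every index lies in the same number of `S`-element subsets, so averaging the subset means over
all `S`-subsets returns the plain mean over `Fin A`: the expected Some-to-All estimator equals
`∫ g log (p / g)` for the mixture density `g = (1/A) ∑ₐ qₐ`. Gibbs' inequality, obtained by
integrating `log x ≤ x - 1`, bounds this by `log ∫ p`.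
-/

open MeasureTheory Finset
open scoped BigOperators

namespace Finset

variable {α : Type*} [DecidableEq α]

theorem sum_powersetCard_sum_eq {M : Type*} [AddCommMonoid M] (t : Finset α) {k : ℕ}
    (hk : 1 ≤ k) (f : α → M) :
    ∑ Φ ∈ t.powersetCard k, ∑ s ∈ Φ, f s = (#t - 1).choose (k - 1) • ∑ s ∈ t, f s := by
  rw [sum_comm' (t' := t) (s' := fun s => (t.powersetCard k).filter ({s} ⊆ ·))]
  · rw [smul_sum]
    refine sum_congr rfl fun s hs => ?_
    rw [sum_const, card_filter_powersetCard_subset _ _ _ (singleton_subset_iff.2 hs) hk,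
      card_singleton]
  · intro Φ s
    simp only [mem_powersetCard, mem_filter, singleton_subset_iff]
    exact ⟨fun h => ⟨h, h.1.1 h.2⟩, And.left⟩

theorem expect_powersetCard_expect {K : Type*} [Field K] [CharZero K] (t : Finset α) {k : ℕ}
    (hk : 1 ≤ k) (hkt : k ≤ #t) (f : α → K) :
    𝔼 Φ ∈ t.powersetCard k, 𝔼 s ∈ Φ, f s = 𝔼 s ∈ t, f s := by
  have hcount : (#t : K) * (#t - 1).choose (k - 1) = (#t).choose k * k := by
    obtain ⟨n, hn⟩ : ∃ n, #t = n + 1 := ⟨#t - 1, by omega⟩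
    obtain ⟨j, rfl⟩ : ∃ j, k = j + 1 := ⟨k - 1, by omega⟩
    rw [hn]
    exact_mod_cast Nat.add_one_mul_choose_eq n j
  calc 𝔼 Φ ∈ t.powersetCard k, 𝔼 s ∈ Φ, f s
      = 𝔼 Φ ∈ t.powersetCard k, (∑ s ∈ Φ, f s) / k :=
        expect_congr rfl fun Φ hΦ => by
          rw [expect_eq_sum_div_card, (mem_powersetCard.1 hΦ).2]
    _ = (#t - 1).choose (k - 1) * (∑ s ∈ t, f s) / ((#t).choose k * k) := by
        rw [← expect_div, expect_eq_sum_div_card, sum_powersetCard_sum_eq t hk, card_powersetCard,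
          nsmul_eq_mul, div_div]
    _ = 𝔼 s ∈ t, f s := by
        have hchoose : ((#t - 1).choose (k - 1) : K) ≠ 0 := by
          exact_mod_cast (Nat.choose_pos (by omega)).ne'
        rw [expect_eq_sum_div_card, ← hcount, mul_comm (#t : K), mul_div_mul_left _ _ hchoose]

end Finset

theorem Real.mul_log_div_le {g p T : ℝ} (hg : 0 ≤ g) (hp : 0 < p) (hT : 0 < T) :
    g * Real.log (p / g) ≤ p / T - g + g * Real.log T := by
  rcases hg.eq_or_lt with rfl | hg
  · simp only [zero_mul, sub_zero, add_zero]
    positivity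
  have hlog : Real.log (p / g) = Real.log (p / (T * g)) + Real.log T := by
    rw [← Real.log_mul (by positivity) hT.ne']
    congr 1
    field_simp
  calc g * Real.log (p / g) = g * Real.log (p / (T * g)) + g * Real.log T := by rw [hlog, mul_add]
    _ ≤ g * (p / (T * g) - 1) + g * Real.log T := by
        gcongr
        exact Real.log_le_sub_one_of_pos (by positivity)
    _ = p / T - g + g * Real.log T := by field_simp

theorem MeasureTheory.integral_mul_log_div_le_log_integral {Z : Type*} [MeasurableSpace Z]
    {μ : Measure Z} {p g : Z → ℝ} (hp : ∀ z, 0 < p z) (hpInt : Integrable p μ)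
    (hg : ∀ z, 0 ≤ g z) (hg1 : ∫ z, g z ∂μ = 1)
    (hInt : Integrable (fun z => g z * Real.log (p z / g z)) μ) :
    ∫ z, g z * Real.log (p z / g z) ∂μ ≤ Real.log (∫ z, p z ∂μ) := by
  have hgInt : Integrable g μ := .of_integral_ne_zero (by simp [hg1])
  have hμ : μ ≠ 0 := by
    rintro rfl
    simp at hg1
  set T := ∫ z, p z ∂μ
  have hT : 0 < T := by
    rw [integral_pos_iff_support_of_nonneg (fun z => (hp z).le) hpInt,
      Function.support_eq_univ fun z => (hp z).ne']
    exact Measure.measure_univ_pos.2 hμ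
  have hdiffInt : Integrable (fun z => p z / T - g z) μ := (hpInt.div_const T).sub hgInt
  calc ∫ z, g z * Real.log (p z / g z) ∂μ
      ≤ ∫ z, (p z / T - g z + g z * Real.log T) ∂μ :=
        integral_mono hInt (hdiffInt.add (hgInt.mul_const _))
          fun z => Real.mul_log_div_le (hg z) (hp z) hT
    _ = Real.log T := by
        rw [integral_add hdiffInt (hgInt.mul_const _),
          integral_sub (hpInt.div_const T) hgInt, integral_div, integral_mul_const, hg1,
          div_self hT.ne']
        ring

theorem some_to_all_expectation_le_log_marginal_general
    {Z : Type*} [MeasurableSpace Z] (μ : Measure Z)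
    (A S : ℕ) (hS : 1 ≤ S) (hSA : S ≤ A)
    (p : Z → ℝ) (hp : ∀ z, 0 < p z) (hpInt : Integrable p μ)
    (q : Fin A → Z → ℝ)
    (hq0 : ∀ a z, 0 < q a z) (hq1 : ∀ a, ∫ z, q a z ∂μ = 1)
    (hInt : ∀ a, Integrable
      (fun z => q a z * Real.log (p z / ((1 / (A : ℝ)) * ∑ a', q a' z))) μ) :
    ∑ Φ ∈ Finset.powersetCard S (Finset.univ : Finset (Fin A)),
        (1 / (A.choose S : ℝ)) * ((1 / (S : ℝ)) *
          ∑ s ∈ Φ, ∫ z, q s z * Real.log (p z / ((1 / (A : ℝ)) * ∑ a, q a z)) ∂μ)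
      ≤ Real.log (∫ z, p z ∂μ) := by
  have hA : (A : ℝ) ≠ 0 := by exact_mod_cast (by omega : A ≠ 0)
  set g : Z → ℝ := fun z => (1 / (A : ℝ)) * ∑ a, q a z
  set I : Fin A → ℝ := fun s => ∫ z, q s z * Real.log (p z / g z) ∂μ
  have hqInt : ∀ a, Integrable (q a) μ := fun a => .of_integral_ne_zero (by simp [hq1])
  have hg1 : ∫ z, g z ∂μ = 1 := by
    simp only [g, integral_const_mul, integral_finsetSum _ fun a _ => hqInt a, hq1, sum_const,
      card_univ, Fintype.card_fin, nsmul_eq_mul, mul_one]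
    field_simp
  have hmix : ∀ z, (∑ a, q a z * Real.log (p z / g z)) / A = g z * Real.log (p z / g z) := by
    intro z
    rw [← sum_mul]
    ring
  calc ∑ Φ ∈ powersetCard S univ, (1 / (A.choose S : ℝ)) * ((1 / (S : ℝ)) * ∑ s ∈ Φ, I s)
      = 𝔼 Φ ∈ powersetCard S univ, 𝔼 s ∈ Φ, I s := by
        rw [expect_eq_sum_div_card, card_powersetCard, card_univ, Fintype.card_fin, sum_div]
        refine sum_congr rfl fun Φ hΦ => ?_
        rw [expect_eq_sum_div_card, (mem_powersetCard.1 hΦ).2]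
        ring
    _ = 𝔼 s, I s := expect_powersetCard_expect _ hS (by simpa using hSA) I
    _ = ∫ z, g z * Real.log (p z / g z) ∂μ := by
        rw [expect_eq_sum_div_card, card_univ, Fintype.card_fin, ← integral_finsetSum _
          fun a _ => hInt a, ← integral_div]
        exact integral_congr_ae (.of_forall hmix)
    _ ≤ Real.log (∫ z, p z ∂μ) :=
        integral_mul_log_div_le_log_integral hp hpInt
          (fun z => mul_nonneg (by positivity) (sum_nonneg fun a _ => (hq0 a z).le)) hg1
          (((integrable_finsetSum _ fun a _ => hInt a).div_const _).congr (.of_forall hmix))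

/-- The expected value of the Some-to-All estimator is a lower bound on the
marginal log-likelihood. -/
theorem some_to_all_expectation_le_log_marginal
    {Z : Type*} [MeasurableSpace Z] (μ : Measure Z) [SigmaFinite μ]
    (A S : ℕ) (hS : 1 ≤ S) (hSA : S ≤ A)
    (p : Z → ℝ) (hp : ∀ z, 0 < p z) (hpInt : Integrable p μ)
    (q : Fin A → Z → ℝ)
    (hq0 : ∀ a z, 0 < q a z) (hq1 : ∀ a, ∫ z, q a z ∂μ = 1)
    (hInt : ∀ a, Integrable
      (fun z => q a z * Real.log (p z / ((1 / (A : ℝ)) * ∑ a', q a' z))) μ) :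
    ∑ Φ ∈ Finset.powersetCard S (Finset.univ : Finset (Fin A)),
        (1 / (A.choose S : ℝ)) * ((1 / (S : ℝ)) *
          ∑ s ∈ Φ, ∫ z, q s z * Real.log (p z / ((1 / (A : ℝ)) * ∑ a, q a z)) ∂μ)
      ≤ Real.log (∫ z, p z ∂μ) :=
  some_to_all_expectation_le_log_marginal_general μ A S hS hSA p hp hpInt q hq0 hq1 hInt
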